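/- Let p = 2q+1 with p, q primes, H = K/N as in the main construction, A of order p acting as the p-cycle, and P = H ⋊ A. Then the set of conjugacy class sizes of P is {1, p, p^{p-2}}. -/

import Mathlib

/-- Size of the conjugacy class of `x`. -/
noncomputable def convClassSize {G : Type*} [Group G] (x : G) : ℕ := Nat.card {y : G // IsConj x y}

/-- The set of conjugacy class sizes of `G`. -/
def classSizes (G : Type*) [Group G] : Set ℕ := Set.range (fun x : G => convClassSize x)

/-- `K = (Z/p)^p`, written multiplicatively. -/
abbrev Kp (p : ℕ) := Fin p → Multiplicative (ZMod p)

/-- The diagonal subgroup `N = ⟨k₁k₂⋯k_p⟩`. -/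
def Np (p : ℕ) : Subgroup (Kp p) :=
  Subgroup.zpowers (fun _ => Multiplicative.ofAdd (1 : ZMod p))

/-- `H = K/N`. -/
abbrev Hp (p : ℕ) := Kp p ⧸ Np p

/-- Coordinate permutation automorphism of `K`. -/
def permK (p : ℕ) (σ : Equiv.Perm (Fin p)) : Kp p ≃* Kp p where
  toEquiv := Equiv.arrowCongr σ (Equiv.refl _)
  map_mul' _ _ := rfl

lemma permK_map_Np (p : ℕ) (σ : Equiv.Perm (Fin p)) :
    (Np p).map (permK p σ : Kp p →* Kp p) = Np p := by
  rw [Np, MonoidHom.map_zpowers]; rfl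

/-- The induced automorphism of `H = K/N`. -/
def permH (p : ℕ) (σ : Equiv.Perm (Fin p)) : Hp p ≃* Hp p :=
  QuotientGroup.congr (Np p) (Np p) (permK p σ) (permK_map_Np p σ)

/-- The action of `Sym_p` on `H` as a homomorphism to `MulAut H`. -/
def permHhom (p : ℕ) : Equiv.Perm (Fin p) →* MulAut (Hp p) where
  toFun σ := permH p σ
  map_one' := by
    ext x
    induction x using QuotientGroup.induction_on with
    | _ x => rfl
  map_mul' σ τ := by
    ext x
    induction x using QuotientGroup.induction_on with
    | _ x => rfl

/-- The subgroup `F = A ⋊ B = ⟨α, β⟩` of `Sym_p`. -/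
abbrev Fsub (p : ℕ) (β : Equiv.Perm (Fin p)) : Subgroup (Equiv.Perm (Fin p)) :=
  Subgroup.closure {finRotate p, β}

/-- The group `G = H ⋊ (A ⋊ B)` of the main construction. -/
abbrev Ggrp (p : ℕ) (β : Equiv.Perm (Fin p)) :=
  Hp p ⋊[(permHhom p).comp (Fsub p β).subtype] Fsub p β

/-- The group `P = H ⋊ A`. -/
abbrev Pgrp (p : ℕ) :=
  Hp p ⋊[(permHhom p).comp (Subgroup.zpowers (finRotate p)).subtype]
    Subgroup.zpowers (finRotate p)

/-! ### Auxiliary general lemmas -/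

open Subgroup

section General

variable {N G : Type*} [CommGroup N] [Group G] (φ : G →* MulAut N)

theorem conj_formula_general (h k : N) (a b : G) (hG : ∀ a b : G, a * b = b * a) :
    (⟨k, b⟩ : N ⋊[φ] G) * ⟨h, a⟩ * (⟨k, b⟩ : N ⋊[φ] G)⁻¹
      = ⟨(k * (φ a k)⁻¹) * (h * (φ b h)⁻¹)⁻¹ * h, a⟩ := by
  have hba : b * a * b⁻¹ = a := by rw [hG b a]; group
  ext
  · simp only [SemidirectProduct.mul_left, SemidirectProduct.inv_left, SemidirectProduct.mul_right,
      SemidirectProduct.inv_right, map_inv, map_mul]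
    have key : (φ b * φ a) ((φ b)⁻¹ k) = φ a k := by
      have h1 : (φ b * φ a) ((φ b)⁻¹ k) = (φ b * φ a * (φ b)⁻¹) k := rfl
      rw [h1, ← map_inv, ← map_mul, ← map_mul, hba]
    rw [key]
    simp only [mul_inv, inv_inv, mul_assoc]
    simp [mul_comm, mul_left_comm]
  · simp [SemidirectProduct.mul_right, SemidirectProduct.inv_right, hba]

/-- The homomorphism `k ↦ k ⬝ (a • k)⁻¹`. -/
def ψgen (a : G) : N →* N :=
  MonoidHom.mk' (fun k => k * ((φ a) k)⁻¹) (by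
    intro x y
    simp [map_mul, mul_inv, mul_comm, mul_left_comm, mul_assoc])

lemma ψgen_apply (a : G) (k : N) : ψgen φ a k = k * ((φ a) k)⁻¹ := rfl

lemma ψgen_one (k : N) : ψgen φ 1 k = 1 := by simp [ψgen_apply]

lemma mem_ker_ψgen_iff (a : G) (h : N) : h ∈ (ψgen φ a).ker ↔ (φ a) h = h := by
  rw [MonoidHom.mem_ker, ψgen_apply, mul_inv_eq_one]
  exact eq_comm

lemma fixed_pow (a : G) (h : N) (hf : (φ a) h = h) (n : ℕ) : (φ (a ^ n)) h = h := by
  induction n with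
  | zero => simp
  | succ n ih =>
    rw [pow_succ, map_mul]
    show (φ (a ^ n)) ((φ a) h) = h
    rw [hf, ih]

lemma fixed_of_mem_zpowers [Finite G] (a b : G) (h : N) (hf : (φ a) h = h)
    (hb : b ∈ zpowers a) : (φ b) h = h := by
  rw [← mem_powers_iff_mem_zpowers] at hb
  obtain ⟨n, rfl⟩ := (Submonoid.mem_powers_iff _ _).1 hb
  exact fixed_pow φ a h hf n

lemma ψgen_pow_range_le (a : G) (n : ℕ) : (ψgen φ (a ^ n)).range ≤ (ψgen φ a).range := by
  induction n with
  | zero =>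
    rintro x ⟨k, rfl⟩
    have : ψgen φ (a ^ 0) k = 1 := by simp [ψgen_apply]
    rw [this]; exact one_mem _
  | succ n ih =>
    rintro x ⟨k, rfl⟩
    have key : ψgen φ (a ^ (n+1)) k = ψgen φ (a ^ n) k * ψgen φ a ((φ (a ^ n)) k) := by
      simp only [ψgen_apply, pow_succ', map_mul]
      show k * ((φ a) ((φ (a ^ n)) k))⁻¹ = _
      rw [mul_assoc, inv_mul_cancel_left]
    rw [key]
    exact mul_mem (ih ⟨k, rfl⟩) ⟨(φ (a ^ n)) k, rfl⟩

lemma ψgen_range_le [Finite G] (a b : G) (hb : b ∈ zpowers a) :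
    (ψgen φ b).range ≤ (ψgen φ a).range := by
  rw [← mem_powers_iff_mem_zpowers] at hb
  obtain ⟨n, rfl⟩ := (Submonoid.mem_powers_iff _ _).1 hb
  exact ψgen_pow_range_le φ a n

lemma zpowers_eq_top_of_prime {p : ℕ} [Fact p.Prime] [Finite G] (hG : Nat.card G = p)
    (a : G) (ha : a ≠ 1) : zpowers a = ⊤ := by
  apply Subgroup.eq_top_of_card_eq
  rw [Nat.card_zpowers, hG]
  have hdvd : orderOf a ∣ p := hG ▸ orderOf_dvd_natCard a
  rcases (Nat.Prime.eq_one_or_self_of_dvd (Fact.out) _ hdvd) with h | h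
  · exact absurd (orderOf_eq_one_iff.1 h) ha
  · exact h

end General

/-! ### Fin/ZMod arithmetic -/

lemma cast_finRotate (n : ℕ) (j : Fin (n+1)) :
    (((finRotate (n+1) j : Fin (n+1)) : ℕ) : ZMod (n+1)) = ((j : ℕ) : ZMod (n+1)) + 1 := by
  rw [finRotate_succ_apply, Fin.val_add, ZMod.natCast_mod]
  push_cast
  simp [ZMod.natCast_self]

lemma arith (n : ℕ) (f : Fin (n+1) → ZMod (n+1)) (c : ZMod (n+1))
    (hstep : ∀ j : Fin (n+1), f (finRotate (n+1) j) = f j + c) :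
    ∀ j : Fin (n+1), f j = f 0 + (j : ℕ) * c := by
  rintro ⟨m, hm⟩
  induction m with
  | zero => simp [show (⟨0, hm⟩ : Fin (n+1)) = 0 from rfl]
  | succ m ih =>
    have hm' : m < n + 1 := Nat.lt_of_succ_lt hm
    have hrot : finRotate (n+1) ⟨m, hm'⟩ = ⟨m+1, hm⟩ := by
      rw [finRotate_succ_apply]
      apply Fin.ext
      rw [Fin.val_add]
      have h1 : (1 : Fin (n+1)).val = 1 := by
        rw [Fin.val_one']; apply Nat.mod_eq_of_lt; omega
      rw [h1]
      exact Nat.mod_eq_of_lt hm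
    have hs := hstep ⟨m, hm'⟩
    rw [hrot, ih hm'] at hs
    rw [hs]
    push_cast
    ring

/-! ### The specific setup -/

section Specific

variable (p : ℕ)

/-- `A = ⟨α⟩`. -/
abbrev Ap := Subgroup.zpowers (finRotate p)

/-- The generator of `A` as an element of `A`. -/
def αA : Ap p := ⟨finRotate p, Subgroup.mem_zpowers _⟩

/-- The action of `A` on `H`. -/
abbrev φP : Ap p →* MulAut (Hp p) := (permHhom p).comp (Ap p).subtype

/-- The diagonal generator. -/
def diag : Kp p := fun _ => Multiplicative.ofAdd (1 : ZMod p)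

/-- The "arithmetic progression" vector. -/
def vap : Kp p := fun i => Multiplicative.ofAdd ((i : ℕ) : ZMod p)

lemma permH_mk (σ : Equiv.Perm (Fin p)) (k : Kp p) :
    (permHhom p σ) (QuotientGroup.mk k) = QuotientGroup.mk (permK p σ k) :=
  QuotientGroup.congr_mk (Np p) (Np p) (permK p σ) (permK_map_Np p σ) k

lemma permK_apply (σ : Equiv.Perm (Fin p)) (k : Kp p) (i : Fin p) :
    permK p σ k i = k (σ.symm i) := rfl

lemma ψP_mk (a : Ap p) (k : Kp p) :
    ψgen (φP p) a (QuotientGroup.mk k)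
      = QuotientGroup.mk (k * (permK p (a : Equiv.Perm (Fin p)) k)⁻¹) := by
  rw [ψgen_apply]
  show QuotientGroup.mk k * ((permHhom p (a : Equiv.Perm (Fin p))) (QuotientGroup.mk k))⁻¹ = _
  rw [permH_mk]
  rfl

end Specific

section Prime

variable (p : ℕ) [Fact p.Prime]

lemma two_le_p : 2 ≤ p := Nat.Prime.two_le Fact.out

instance : Finite (Pgrp p) :=
  Finite.of_injective (fun x => (x.left, x.right)) (by intro a b h; ext <;> simp_all)

lemma card_Ap : Nat.card (Ap p) = p := by
  rw [Nat.card_zpowers]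
  rw [(isCycle_finRotate_of_le (two_le_p p)).orderOf,
    support_finRotate_of_le (two_le_p p)]
  simp

lemma card_Kp : Nat.card (Kp p) = p ^ p := by
  rw [Nat.card_pi]
  have h1 : Nat.card (Multiplicative (ZMod p)) = p := by
    rw [Nat.card_congr Multiplicative.toAdd, Nat.card_zmod]
  simp [h1]

lemma mem_Np_iff (x : Kp p) :
    x ∈ Np p ↔ ∃ c : ZMod p, ∀ i, x i = Multiplicative.ofAdd c := by
  constructor
  · rintro ⟨m, rfl⟩
    exact ⟨(m : ZMod p), fun i => by
      show (Multiplicative.ofAdd (1 : ZMod p)) ^ m = _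
      rw [← ofAdd_zsmul]
      norm_num⟩
  · rintro ⟨c, hc⟩
    refine ⟨(c.val : ℤ), funext fun i => ?_⟩
    show (Multiplicative.ofAdd (1 : ZMod p)) ^ (c.val : ℤ) = x i
    rw [hc i, ← ofAdd_zsmul]
    congr 1
    rw [zsmul_eq_mul, mul_one]
    push_cast
    rw [ZMod.natCast_val, ZMod.cast_id]

lemma card_Np : Nat.card (Np p) = p := by
  have h : Np p = Subgroup.zpowers (diag p) := rfl
  rw [h, Nat.card_zpowers]
  apply orderOf_eq_prime
  · funext i
    show (Multiplicative.ofAdd (1 : ZMod p)) ^ p = 1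
    rw [← ofAdd_nsmul]
    simp [ZMod.natCast_self]
  · intro hd
    have h0 : (0 : ℕ) < p := (two_le_p p).trans_lt' (by norm_num)
    have := congrFun hd ⟨0, h0⟩
    simp only [diag, Pi.one_apply] at this
    have h1 : (1 : ZMod p) = 0 := by
      have := congrArg Multiplicative.toAdd this
      simpa using this
    exact one_ne_zero h1

lemma card_Hp : Nat.card (Hp p) = p ^ (p - 1) := by
  have h := Subgroup.card_eq_card_quotient_mul_card_subgroup (Np p)
  rw [card_Kp, card_Np] at h
  have hp2 : 2 ≤ p := two_le_p p
  have hpow : p ^ p = p ^ (p - 1) * p := by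
    rw [← pow_succ]; congr 1; omega
  rw [hpow] at h
  have hppos : 0 < p := by omega
  exact (Nat.eq_of_mul_eq_mul_right hppos h.symm)

lemma mk_vap_ne_one : (QuotientGroup.mk (vap p) : Hp p) ≠ 1 := by
  intro h
  rw [QuotientGroup.eq_one_iff, mem_Np_iff] at h
  obtain ⟨c, hc⟩ := h
  have hp2 : 2 ≤ p := two_le_p p
  have h0 := hc ⟨0, by omega⟩
  have h1 := hc ⟨1, by omega⟩
  simp only [vap] at h0 h1
  have e0 : ((0 : ℕ) : ZMod p) = c := by
    have := congrArg Multiplicative.toAdd h0; simpa using this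
  have e1 : ((1 : ℕ) : ZMod p) = c := by
    have := congrArg Multiplicative.toAdd h1; simpa using this
  rw [← e0] at e1
  push_cast at e1
  exact one_ne_zero e1

lemma orderOf_mk_vap : orderOf (QuotientGroup.mk (vap p) : Hp p) = p := by
  apply orderOf_eq_prime
  · have hv : vap p ^ p = 1 := by
      funext i
      rw [Pi.pow_apply, Pi.one_apply]
      show (Multiplicative.ofAdd _) ^ p = 1
      rw [← ofAdd_nsmul]
      simp [nsmul_eq_mul, ZMod.natCast_self]
    rw [← QuotientGroup.mk_pow, hv, QuotientGroup.mk_one]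
  · exact mk_vap_ne_one p

lemma ker_psi_alpha :
    (ψgen (φP p) (αA p)).ker = Subgroup.zpowers (QuotientGroup.mk (vap p) : Hp p) := by
  obtain ⟨n, rfl⟩ : ∃ n, p = n + 1 := ⟨p - 1, by have := two_le_p p; omega⟩
  have hcoe : ((αA (n+1) : Ap (n+1)) : Equiv.Perm (Fin (n+1))) = finRotate (n+1) := rfl
  ext h
  constructor
  · intro hker
    obtain ⟨k, rfl⟩ := QuotientGroup.mk_surjective h
    rw [MonoidHom.mem_ker, ψP_mk, hcoe, QuotientGroup.eq_one_iff, mem_Np_iff] at hker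
    obtain ⟨c, hc⟩ := hker
    have hstep : ∀ j : Fin (n+1),
        Multiplicative.toAdd (k (finRotate (n+1) j)) = Multiplicative.toAdd (k j) + c := by
      intro j
      have h1 := hc (finRotate (n+1) j)
      rw [Pi.mul_apply, Pi.inv_apply, permK_apply, Equiv.symm_apply_apply] at h1
      have := congrArg Multiplicative.toAdd h1
      simp only [toAdd_mul, toAdd_inv, toAdd_ofAdd] at this
      linear_combination this
    have harith := arith n (fun i => Multiplicative.toAdd (k i)) c hstep
    rw [Subgroup.mem_zpowers_iff]
    refine ⟨(c.val : ℤ), ?_⟩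
    rw [zpow_natCast, ← QuotientGroup.mk_pow]
    rw [QuotientGroup.eq]
    rw [mem_Np_iff]
    refine ⟨Multiplicative.toAdd (k 0), fun i => ?_⟩
    rw [Pi.mul_apply, Pi.inv_apply, Pi.pow_apply]
    have hki := harith i
    have hvap : Multiplicative.toAdd ((vap (n+1) i) ^ (c.val)) = ((i : ℕ) : ZMod (n+1)) * c := by
      rw [toAdd_pow]
      show (c.val : ℕ) • ((i : ℕ) : ZMod (n+1)) = _
      rw [nsmul_eq_mul]
      rw [ZMod.natCast_val, ZMod.cast_id]
      ring
    apply Multiplicative.toAdd.injective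
    simp only [toAdd_mul, toAdd_inv, toAdd_ofAdd, hvap, hki]
    ring
  · intro hmem
    have hv : (QuotientGroup.mk (vap (n+1)) : Hp (n+1)) ∈ (ψgen (φP (n+1)) (αA (n+1))).ker := by
      rw [MonoidHom.mem_ker, ψP_mk, hcoe, QuotientGroup.eq_one_iff, mem_Np_iff]
      refine ⟨1, fun i => ?_⟩
      rw [Pi.mul_apply, Pi.inv_apply, permK_apply]
      apply Multiplicative.toAdd.injective
      simp only [toAdd_mul, toAdd_inv, toAdd_ofAdd, vap]
      have := cast_finRotate n ((finRotate (n+1)).symm i)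
      rw [Equiv.apply_symm_apply] at this
      rw [this]
      ring
    exact Subgroup.zpowers_le.2 hv hmem

lemma card_ker_psi_alpha : Nat.card (ψgen (φP p) (αA p)).ker = p := by
  rw [ker_psi_alpha, Nat.card_zpowers, orderOf_mk_vap]

lemma card_range_psi_alpha : Nat.card (ψgen (φP p) (αA p)).range = p ^ (p - 2) := by
  have h := Subgroup.card_eq_card_quotient_mul_card_subgroup (ψgen (φP p) (αA p)).ker
  rw [card_Hp, card_ker_psi_alpha,
    Nat.card_congr (QuotientGroup.quotientKerEquivRange (ψgen (φP p) (αA p))).toEquiv] at h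
  have hp2 : 2 ≤ p := two_le_p p
  have hpow : p ^ (p - 1) = p ^ (p - 2) * p := by
    rw [← pow_succ]; congr 1; omega
  rw [hpow] at h
  exact Nat.eq_of_mul_eq_mul_right (by omega) h.symm

lemma mem_zpowers_alpha (a : Ap p) : a ∈ Subgroup.zpowers (αA p) := by
  rw [Subgroup.mem_zpowers_iff]
  obtain ⟨m, hm⟩ := Subgroup.mem_zpowers_iff.1 a.2
  exact ⟨m, Subtype.ext (by rw [← hm]; rfl)⟩

lemma zpowers_top (a : Ap p) (ha : a ≠ 1) : Subgroup.zpowers a = ⊤ :=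
  zpowers_eq_top_of_prime (card_Ap p) a ha

lemma mem_zpowers_of_ne (a b : Ap p) (ha : a ≠ 1) : b ∈ Subgroup.zpowers a := by
  rw [zpowers_top p a ha]; trivial

lemma range_eq (a : Ap p) (ha : a ≠ 1) :
    (ψgen (φP p) a).range = (ψgen (φP p) (αA p)).range :=
  le_antisymm (ψgen_range_le _ _ _ (mem_zpowers_alpha p a))
    (ψgen_range_le _ _ _ (mem_zpowers_of_ne p a (αA p) ha))

lemma comm_Ap : ∀ a b : Ap p, a * b = b * a := fun a b =>
  (Subgroup.zpowers_isMulCommutative (finRotate p)).is_comm.comm a b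

lemma classSet_ne (h : Hp p) (a : Ap p) (ha : a ≠ 1) :
    {y : Pgrp p | IsConj (⟨h, a⟩ : Pgrp p) y}
      = (fun d : Hp p => (⟨d * h, a⟩ : Pgrp p)) ''
          ((ψgen (φP p) (αA p)).range : Set (Hp p)) := by
  ext y
  simp only [Set.mem_setOf_eq, isConj_iff, Set.mem_image, SetLike.mem_coe]
  constructor
  · rintro ⟨⟨k, b⟩, rfl⟩
    rw [conj_formula_general _ h k a b (comm_Ap p)]
    refine ⟨(ψgen (φP p) a k) * ((ψgen (φP p) b h)⁻¹), ?_, rfl⟩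
    rw [← range_eq p a ha]
    exact mul_mem ⟨k, rfl⟩
      (inv_mem (ψgen_range_le (φP p) a b (mem_zpowers_of_ne p a b ha) ⟨h, rfl⟩))
  · rintro ⟨d, hd, rfl⟩
    rw [← range_eq p a ha] at hd
    obtain ⟨k, rfl⟩ := hd
    refine ⟨⟨k, 1⟩, ?_⟩
    rw [conj_formula_general _ h k a 1 (comm_Ap p)]
    ext
    · show ψgen (φP p) a k * (ψgen (φP p) 1 h)⁻¹ * h = ψgen (φP p) a k * h
      rw [ψgen_one, inv_one, mul_one]
    · rfl

lemma convClassSize_eq_ncard (x : Pgrp p) :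
    convClassSize x = Set.ncard {y : Pgrp p | IsConj x y} :=
  Nat.card_coe_set_eq _

lemma convClassSize_ne (h : Hp p) (a : Ap p) (ha : a ≠ 1) :
    convClassSize (⟨h, a⟩ : Pgrp p) = p ^ (p - 2) := by
  rw [convClassSize_eq_ncard, classSet_ne p h a ha]
  have hinj : Function.Injective (fun d : Hp p => (⟨d * h, a⟩ : Pgrp p)) := by
    intro d1 d2 hde
    have := congrArg SemidirectProduct.left hde
    simpa using mul_right_cancel (this : d1 * h = d2 * h)
  rw [Set.ncard_image_of_injective _ hinj, ← Nat.card_coe_set_eq]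
  exact card_range_psi_alpha p

lemma classSet_one (h : Hp p) :
    {y : Pgrp p | IsConj (⟨h, (1 : Ap p)⟩ : Pgrp p) y}
      = Set.range (fun b : Ap p => (⟨((φP p) b) h, 1⟩ : Pgrp p)) := by
  have hcompute : ∀ (k : Hp p) (b : Ap p),
      ψgen (φP p) 1 k * (ψgen (φP p) b h)⁻¹ * h = ((φP p) b) h := by
    intro k b
    rw [ψgen_one, one_mul, ψgen_apply]
    group
  ext y
  simp only [Set.mem_setOf_eq, isConj_iff, Set.mem_range]
  constructor
  · rintro ⟨⟨k, b⟩, rfl⟩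
    rw [conj_formula_general _ h k 1 b (comm_Ap p)]
    refine ⟨b, ?_⟩
    ext
    · exact (hcompute k b).symm
    · rfl
  · rintro ⟨b, rfl⟩
    refine ⟨⟨1, b⟩, ?_⟩
    rw [conj_formula_general _ h 1 1 b (comm_Ap p)]
    ext
    · exact hcompute 1 b
    · rfl

lemma convClassSize_one_central (h : Hp p) (hc : h ∈ (ψgen (φP p) (αA p)).ker) :
    convClassSize (⟨h, (1 : Ap p)⟩ : Pgrp p) = 1 := by
  rw [convClassSize_eq_ncard, classSet_one]
  have hfix : ∀ b : Ap p, ((φP p) b) h = h := fun b =>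
    fixed_of_mem_zpowers (φP p) (αA p) b h ((mem_ker_ψgen_iff _ _ _).1 hc)
      (mem_zpowers_alpha p b)
  have : (fun b : Ap p => (⟨((φP p) b) h, 1⟩ : Pgrp p))
      = fun _ => (⟨h, 1⟩ : Pgrp p) := by
    funext b; rw [hfix b]
  rw [this, Set.range_const, Set.ncard_singleton]

lemma convClassSize_one_noncentral (h : Hp p) (hc : h ∉ (ψgen (φP p) (αA p)).ker) :
    convClassSize (⟨h, (1 : Ap p)⟩ : Pgrp p) = p := by
  rw [convClassSize_eq_ncard, classSet_one]
  have hinj : Function.Injective (fun b : Ap p => (⟨((φP p) b) h, 1⟩ : Pgrp p)) := by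
    intro b b' hbe
    have heq : ((φP p) b) h = ((φP p) b') h := by
      have := congrArg SemidirectProduct.left hbe
      simpa using this
    by_contra hbb
    have hne : b'⁻¹ * b ≠ 1 := fun h1 => hbb (inv_mul_eq_one.1 h1).symm
    have hfixc : ((φP p) (b'⁻¹ * b)) h = h := by
      rw [map_mul]
      show ((φP p) b'⁻¹) (((φP p) b) h) = h
      rw [heq, ← MulAut.mul_apply, ← map_mul, inv_mul_cancel, map_one]
      rfl
    have := fixed_of_mem_zpowers (φP p) (b'⁻¹ * b) (αA p) h hfixc
      (mem_zpowers_of_ne p (b'⁻¹ * b) (αA p) hne)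
    exact hc ((mem_ker_ψgen_iff _ _ _).2 this)
  rw [← Set.image_univ, Set.ncard_image_of_injective _ hinj, Set.ncard_univ, card_Ap]

/-- Witness for a non-central element of `H`. -/
def e0 : Kp p := fun i => Multiplicative.ofAdd (if (i : ℕ) = 0 then (1 : ZMod p) else 0)

lemma alpha_ne_one : αA p ≠ 1 := by
  obtain ⟨n, hn⟩ : ∃ n, p = n + 1 := ⟨p - 1, by have := two_le_p p; omega⟩
  subst hn
  intro hone
  have h1 : finRotate (n+1) = 1 := congrArg Subtype.val hone
  have h2 : finRotate (n+1) 0 = (0 : Fin (n+1)) := by rw [h1]; rfl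
  rw [finRotate_succ_apply] at h2
  have h3 : ((0 + 1 : Fin (n+1)) : ℕ) = ((0 : Fin (n+1)) : ℕ) := congrArg Fin.val h2
  have hn1 : 1 ≤ n := by
    have := two_le_p (n+1); omega
  rw [Fin.val_add, Fin.val_one', Fin.val_zero] at h3
  rw [Nat.mod_eq_of_lt (show 1 < n+1 by omega)] at h3
  rw [Nat.mod_eq_of_lt (show 0 + 1 < n+1 by omega)] at h3
  omega

lemma e0_not_ker (hp3 : 3 ≤ p) :
    (QuotientGroup.mk (e0 p) : Hp p) ∉ (ψgen (φP p) (αA p)).ker := by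
  obtain ⟨n, hn⟩ : ∃ n, p = n + 1 := ⟨p - 1, by omega⟩
  subst hn
  have hn2 : 2 ≤ n := by omega
  have hcoe : ((αA (n+1) : Ap (n+1)) : Equiv.Perm (Fin (n+1))) = finRotate (n+1) := rfl
  intro hker
  rw [MonoidHom.mem_ker, ψP_mk, hcoe, QuotientGroup.eq_one_iff, mem_Np_iff] at hker
  obtain ⟨c, hc⟩ := hker
  have key : ∀ j : Fin (n+1),
      Multiplicative.toAdd (e0 (n+1) (finRotate (n+1) j))
        - Multiplicative.toAdd (e0 (n+1) j) = c := by
    intro j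
    have h1 := hc (finRotate (n+1) j)
    rw [Pi.mul_apply, Pi.inv_apply, permK_apply, Equiv.symm_apply_apply] at h1
    have := congrArg Multiplicative.toAdd h1
    simp only [toAdd_mul, toAdd_inv, toAdd_ofAdd] at this
    linear_combination this
  have h1v : ((1 : Fin (n+1)) : ℕ) = 1 := by
    rw [Fin.val_one']; exact Nat.mod_eq_of_lt (by omega)
  have h2v : ((1 + 1 : Fin (n+1)) : ℕ) = 2 := by
    rw [Fin.val_add, h1v]; exact Nat.mod_eq_of_lt (by omega)
  have k0 := key 0
  have k1 := key 1
  rw [finRotate_succ_apply, zero_add] at k0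
  rw [finRotate_succ_apply] at k1
  simp only [e0, toAdd_ofAdd, h1v, h2v, Fin.val_zero] at k0 k1
  norm_num at k0 k1
  rw [← k1] at k0
  exact one_ne_zero (neg_eq_zero.1 k0)

end Prime

theorem stmt_16 (p q : ℕ) [Fact p.Prime] [Fact q.Prime] (hpq : p = 2 * q + 1)
    :
    classSizes (Pgrp p) = {1, p, p ^ (p - 2)} := by
  have hq2 : 2 ≤ q := Nat.Prime.two_le Fact.out
  have hp3 : 3 ≤ p := by omega
  ext m
  simp only [classSizes, Set.mem_range, Set.mem_insert_iff, Set.mem_singleton_iff]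
  constructor
  · rintro ⟨x, rfl⟩
    obtain ⟨h, a⟩ := x
    by_cases ha : a = 1
    · subst ha
      by_cases hker : h ∈ (ψgen (φP p) (αA p)).ker
      · left; exact convClassSize_one_central p h hker
      · right; left; exact convClassSize_one_noncentral p h hker
    · right; right; exact convClassSize_ne p h a ha
  · rintro (hm | hm | hm)
    · exact ⟨⟨1, 1⟩, by rw [hm]; exact convClassSize_one_central p 1 (one_mem _)⟩
    · exact ⟨⟨QuotientGroup.mk (e0 p), 1⟩,
        by rw [hm]; exact convClassSize_one_noncentral p _ (e0_not_ker p hp3)⟩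
    · exact ⟨⟨1, αA p⟩, by rw [hm]; exact convClassSize_ne p 1 (αA p) (alpha_ne_one p)⟩
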